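/- arXiv:2009.05950 — 2 statements merged into one kernel-verified Lean document; each statement's English description precedes it below -/
import Mathlib

section
/- For every n ≥ 2, the polynomial p_n(z) = 2^{n+1} z^{2n+1} + Σ_{s=1}^{n} 2^{n+1} C(n,s) z^{2n-2s+2} is not interpolating: the coefficients of z^{2n} and z^{2n+1} are nonzero but the coefficient of every odd exponent strictly between 2 and 2n+1 other than 2n+1 is zero; in particular the coefficient of z^{2n-1} is zero while those of z^{2n-2} and z^{2n} are nonzero. -/
open Polynomial

noncomputable def pn (n : ℕ) : Polynomial ℕ :=
  C (2 ^ (n + 1)) * X ^ (2 * n + 1) +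
    ∑ s ∈ Finset.Icc 1 n, C (2 ^ (n + 1) * n.choose s) * X ^ (2 * n - 2 * s + 2)

lemma pn_coeff (n k : ℕ) : (pn n).coeff k =
    (if 2 * n + 1 = k then 2 ^ (n + 1) else 0) +
    ∑ s ∈ Finset.Icc 1 n,
      (if 2 * n - 2 * s + 2 = k then 2 ^ (n + 1) * n.choose s else 0) := by
  simp only [pn, coeff_add, finset_sum_coeff, C_mul_X_pow_eq_monomial, coeff_monomial]

theorem stmt_4 (n : ℕ) (hn : 2 ≤ n) :
    (pn n).coeff (2 * n) ≠ 0 ∧ (pn n).coeff (2 * n + 1) ≠ 0 ∧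
    (∀ k, Odd k → 2 < k → k < 2 * n + 1 → (pn n).coeff k = 0) ∧
    (pn n).coeff (2 * n - 1) = 0 ∧
    (pn n).coeff (2 * n - 2) ≠ 0 ∧ (pn n).coeff (2 * n) ≠ 0 := by
  have h2n : (pn n).coeff (2 * n) ≠ 0 := by
    intro h
    rw [pn_coeff, if_neg (by omega), zero_add, Finset.sum_eq_zero_iff] at h
    have := h 1 (Finset.mem_Icc.mpr ⟨le_refl 1, by omega⟩)
    rw [if_pos (by omega)] at this
    have h1 : 0 < 2 ^ (n + 1) * n.choose 1 := by
      have := Nat.choose_pos (n := n) (k := 1) (by omega)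
      positivity
    omega
  refine ⟨h2n, ?_, ?_, ?_, ?_, h2n⟩
  · rw [pn_coeff, if_pos rfl]
    have : ∑ s ∈ Finset.Icc 1 n,
        (if 2 * n - 2 * s + 2 = 2 * n + 1 then 2 ^ (n + 1) * n.choose s else 0) = 0 := by
      apply Finset.sum_eq_zero
      intro s hs
      rw [Finset.mem_Icc] at hs
      exact if_neg (by omega)
    rw [this, add_zero]
    positivity
  · intro k hk h2 hlt
    obtain ⟨m, hm⟩ := hk
    rw [pn_coeff, if_neg (by omega), zero_add]
    apply Finset.sum_eq_zero
    intro s hs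
    rw [Finset.mem_Icc] at hs
    exact if_neg (by omega)
  · rw [pn_coeff, if_neg (by omega), zero_add]
    apply Finset.sum_eq_zero
    intro s hs
    rw [Finset.mem_Icc] at hs
    exact if_neg (by omega)
  · intro h
    rw [pn_coeff, if_neg (by omega), zero_add, Finset.sum_eq_zero_iff] at h
    have := h 2 (Finset.mem_Icc.mpr ⟨by omega, by omega⟩)
    rw [if_pos (by omega)] at this
    have h1 : 0 < 2 ^ (n + 1) * n.choose 2 := by
      have := Nat.choose_pos (n := n) (k := 2) hn
      positivity
    omega
end

section
/- For every n ≥ 1, the support of the polynomial q_n(z) = 2^{n+1}(n+2) z^{2n+2} + Σ_{s=2}^{n} 2^{n+1}(C(n,s)+C(n,s-1)) z^{2n-2s+4} + 2^{n+1} z^{2} equals {2} ∪ {2k : 2 ≤ k ≤ n+1}, which contains no odd numbers; in particular q_n is not interpolating since 2 and 4 are in the support but 3 is not. -/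
open Polynomial

noncomputable def qn (n : ℕ) : Polynomial ℕ :=
  C (2 ^ (n + 1) * (n + 2)) * X ^ (2 * n + 2) +
    ∑ s ∈ Finset.Icc 2 n,
      C (2 ^ (n + 1) * (n.choose s + n.choose (s - 1))) * X ^ (2 * n - 2 * s + 4) +
    C (2 ^ (n + 1)) * X ^ 2

/-! Coefficients in ℕ cannot cancel, so the support of `qn n` is exactly the set of exponents of
its monomials: `2n + 2`, `2`, and `2n - 2s + 4 = 2(n + 2 - s)` for `2 ≤ s ≤ n`, which together are
the even numbers `2k` with `2 ≤ k ≤ n + 1` plus `2`. -/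

namespace Polynomial

variable {R : Type*} [Semiring R] [PartialOrder R] [CanonicallyOrderedAdd R]

theorem support_add_eq_union (p q : R[X]) : (p + q).support = p.support ∪ q.support := by
  ext m
  simp only [mem_support_iff, coeff_add, Finset.mem_union, ne_eq, add_eq_zero, not_and_or]

theorem support_sum_eq_biUnion {ι : Type*} (s : Finset ι) (f : ι → R[X]) :
    (∑ i ∈ s, f i).support = s.biUnion fun i => (f i).support := by
  ext m
  simp [finsetSum_coeff, Finset.sum_eq_zero_iff]

end Polynomial

theorem support_qn (n : ℕ) :
    (qn n).support = insert 2 ((Finset.Icc 2 (n + 1)).image (fun k => 2 * k)) := by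
  have hchoose : ∀ s ∈ Finset.Icc 2 n, n.choose s + n.choose (s - 1) ≠ 0 := fun s hs =>
    (Nat.add_pos_left (Nat.choose_pos (Finset.mem_Icc.1 hs).2) _).ne'
  rw [qn, support_add_eq_union, support_add_eq_union, support_sum_eq_biUnion,
    support_C_mul_X_pow _ (by positivity), support_C_mul_X_pow _ (by positivity),
    Finset.biUnion_congr rfl fun s hs =>
      support_C_mul_X_pow _ (mul_ne_zero (by positivity) (hchoose s hs))]
  ext m
  simp only [Finset.mem_union, Finset.mem_singleton, Finset.mem_biUnion, Finset.mem_insert,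
    Finset.mem_image, Finset.mem_Icc]
  constructor
  · rintro ((rfl | ⟨s, hs, rfl⟩) | rfl)
    · rcases Nat.eq_zero_or_pos n with rfl | hn
      · exact Or.inl rfl
      · exact Or.inr ⟨n + 1, by omega, by ring⟩
    · exact Or.inr ⟨n + 2 - s, by omega, by omega⟩
    · exact Or.inl rfl
  · rintro (rfl | ⟨k, hk, rfl⟩)
    · exact Or.inr rfl
    · rcases hk.2.lt_or_eq with hk' | rfl
      · exact Or.inl (Or.inr ⟨n + 2 - k, by omega, by omega⟩)
      · exact Or.inl (Or.inl (by ring))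

theorem stmt_6 (n : ℕ) (hn : 1 ≤ n) :
    (qn n).support = insert 2 ((Finset.Icc 2 (n + 1)).image (fun k => 2 * k)) ∧
    (∀ m ∈ (qn n).support, ¬ Odd m) ∧
    2 ∈ (qn n).support ∧ 4 ∈ (qn n).support ∧ 3 ∉ (qn n).support := by
  have hmem : ∀ m, m ∈ (qn n).support ↔ m = 2 ∨ ∃ k, (2 ≤ k ∧ k ≤ n + 1) ∧ 2 * k = m := by
    simp [support_qn]
  refine ⟨support_qn n, ?_, (hmem 2).2 (Or.inl rfl), (hmem 4).2 (Or.inr ⟨2, by omega, rfl⟩), ?_⟩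
  · intro m hm
    rcases (hmem m).1 hm with rfl | ⟨k, -, rfl⟩ <;> simp
  · rw [hmem]
    omega
end
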